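/- Let X be a proper, δ-hyperbolic metric space, Γ a discrete group of isometries of X, x ∈ X a basepoint, τ ≥ 0 and Θ = (θ_i) an increasing unbounded sequence of real numbers. Then (i) Λ_{τ,Θ}(Γ) is contained in the limit set Λ(Γ), and (ii) Λ_{τ,Θ}(Γ) is a closed subset of ∂X. -/

import Mathlib

open Filter Metric Set MeasureTheory Topology
open scoped ENNReal NNReal

noncomputable section

namespace Paper

variable {X : Type*} [MetricSpace X]

/-- The Gromov product `(y,z)_x`. -/
def gromov (x y z : X) : ℝ := (dist x y + dist x z - dist y z) / 2

/-- A metric space is geodesic if every two points are joined by an isometrically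
parametrized segment. -/
def IsGeodesicSpace (X : Type*) [MetricSpace X] : Prop :=
  ∀ x y : X, ∃ γ : ℝ → X, γ 0 = x ∧ γ (dist x y) = y ∧
    ∀ s ∈ Set.Icc (0:ℝ) (dist x y), ∀ t ∈ Set.Icc (0:ℝ) (dist x y),
      dist (γ s) (γ t) = |s - t|

/-- `δ`-hyperbolicity via the four points condition on Gromov products. -/
def IsHyperbolic (X : Type*) [MetricSpace X] (δ : ℝ) : Prop :=
  ∀ w x y z : X, min (gromov w x y) (gromov w y z) - δ ≤ gromov w x z

/-- A geodesic ray, i.e. an isometric embedding of `[0,∞)`. -/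
def IsGeodesicRay (ξ : ℝ → X) : Prop :=
  ∀ s t : ℝ, 0 ≤ s → 0 ≤ t → dist (ξ s) (ξ t) = |s - t|

/-- Sequences converging to infinity: the mutual Gromov products diverge. -/
def IsGromovSeq (u : ℕ → X) : Prop :=
  ∀ x : X, Tendsto (fun p : ℕ × ℕ => gromov x (u p.1) (u p.2)) atTop atTop

def GromovSeq (X : Type*) [MetricSpace X] := {u : ℕ → X // IsGromovSeq u}

/-- Two sequences converging to infinity define the same boundary point iff their mutual
Gromov products diverge. -/
def gromovRel (u v : GromovSeq X) : Prop :=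
  ∀ x : X, Tendsto (fun p : ℕ × ℕ => gromov x (u.1 p.1) (v.1 p.2)) atTop atTop

/-- The Gromov boundary of `X`. -/
def GromovBoundary (X : Type*) [MetricSpace X] := Quot (gromovRel (X := X))

/-- The boundary point determined by a sequence converging to infinity. -/
def GromovSeq.pt (u : GromovSeq X) : GromovBoundary X := Quot.mk _ u

/-- The geodesic ray `ξ` joins `ξ 0` to the boundary point `z`. -/
def RayTo (ξ : ℝ → X) (z : GromovBoundary X) : Prop :=
  ∃ h : IsGromovSeq (fun n : ℕ => ξ n), GromovSeq.pt ⟨fun n : ℕ => ξ n, h⟩ = z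

/-- The Gromov product of two boundary points with respect to the basepoint `x`. -/
def bProd (x : X) (z w : GromovBoundary X) : EReal :=
  ⨆ (u : GromovSeq X) (v : GromovSeq X) (_ : u.pt = z) (_ : v.pt = w),
    Filter.liminf (fun p : ℕ × ℕ => ((gromov x (u.1 p.1) (v.1 p.2) : ℝ) : EReal)) atTop

/-- The generalized visual ball of center `z` and radius `ρ` (with respect to
the basepoint `x`). -/
def visBall (x : X) (z : GromovBoundary X) (ρ : ℝ) : Set (GromovBoundary X) :=
  {w | (Real.log ρ⁻¹ : EReal) < bProd x z w}

/-- The natural topology of the Gromov boundary, generated by the generalized visual balls. -/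
def bTop (X : Type*) [MetricSpace X] : TopologicalSpace (GromovBoundary X) :=
  TopologicalSpace.generateFrom
    {S | ∃ (x : X) (z : GromovBoundary X) (ρ : ℝ), 0 < ρ ∧ S = visBall x z ρ}

section Group

variable (G : Type*) [Group G] [MulAction G X]

/-- A group of isometries is discrete if orbits meet balls in finitely many points. -/
def DiscreteAction (X : Type*) [MetricSpace X] [MulAction G X] : Prop :=
  ∀ (x : X) (R : ℝ), {g : G | dist x (g • x) ≤ R}.Finite

def FreeAction (X : Type*) [MetricSpace X] [MulAction G X] : Prop :=
  ∀ (g : G) (x : X), g • x = x → g = 1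

/-- The limit set: accumulation points at infinity of an orbit. -/
def limitSet (x : X) : Set (GromovBoundary X) :=
  {z | ∃ (g : ℕ → G) (h : IsGromovSeq fun n => g n • x), GromovSeq.pt ⟨_, h⟩ = z}

/-- The set `Λ_{τ,Θ}(Γ)`. -/
def lambdaSet (x : X) (τ : ℝ) (θ : ℕ → ℝ) : Set (GromovBoundary X) :=
  {z | ∃ ξ : ℝ → X, IsGeodesicRay ξ ∧ ξ 0 = x ∧ RayTo ξ z ∧
    ∀ i : ℕ, ∃ t : ℝ, 0 ≤ t ∧ θ i ≤ dist x (ξ t) ∧ dist x (ξ t) ≤ θ (i + 1) ∧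
      Metric.infDist (ξ t) (MulAction.orbit G x) ≤ τ}

/-- The set `Λ_τ(Γ) = Λ_{τ, (iτ)}(Γ)`. -/
def lambdaTau (x : X) (τ : ℝ) : Set (GromovBoundary X) :=
  lambdaSet G x τ fun i => i * τ

/-- Increasing unbounded sequences of reals. -/
def IncrUnbounded (θ : ℕ → ℝ) : Prop := StrictMono θ ∧ Tendsto θ atTop atTop

/-- The radial limit set. -/
def radialSet (x : X) : Set (GromovBoundary X) :=
  ⋃ (τ : ℝ) (_ : 0 ≤ τ) (θ : ℕ → ℝ) (_ : IncrUnbounded θ), lambdaSet G x τ θ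

/-- The uniform radial limit set. -/
def uRadialSet (x : X) : Set (GromovBoundary X) :=
  ⋃ (τ : ℝ) (_ : 0 ≤ τ), lambdaTau G x τ

/-- The ergodic limit set. -/
def ergodicLimitSet (x : X) : Set (GromovBoundary X) :=
  ⋃ (τ : ℝ) (_ : 0 ≤ τ) (θ : ℕ → ℝ)
    (_ : IncrUnbounded θ ∧ ∃ L : ℝ, Tendsto (fun i : ℕ => θ i / i) atTop (nhds L)),
    lambdaSet G x τ θ

/-- The number of orbit points in the open ball `B(x,T)`. -/
def orbitCount (x : X) (T : ℝ) : ℕ :=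
  Nat.card {y : X // y ∈ MulAction.orbit G x ∧ dist x y < T}

/-- The critical exponent `h_Γ = limsup (1/T) log #(Γx ∩ B(x,T))`. -/
def critExp (x : X) : EReal :=
  limsup (fun T : ℝ => ((Real.log (orbitCount G x T) / T : ℝ) : EReal)) atTop

/-- The lower critical exponent, defined with a limit inferior. -/
def critExpLower (x : X) : EReal :=
  liminf (fun T : ℝ => ((Real.log (orbitCount G x T) / T : ℝ) : EReal)) atTop

/-- The graph of the action of an isometry on the Gromov boundary. -/
def BSmul (g : G) (z w : GromovBoundary X) : Prop :=
  ∃ u v : GromovSeq X, u.pt = z ∧ v.pt = w ∧ ∀ n, v.1 n = g • u.1 n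

end Group

section Dimensions

/-- Hausdorff `α`-content at scale `η`, using countable coverings by generalized visual balls. -/
def visHContent (x : X) (α η : ℝ) (B : Set (GromovBoundary X)) : ℝ≥0∞ :=
  ⨅ (z : ℕ → GromovBoundary X) (ρ : ℕ → ℝ)
    (_ : ∀ i, 0 < ρ i ∧ ρ i ≤ η) (_ : B ⊆ ⋃ i, visBall x (z i) (ρ i)),
    ∑' i, ENNReal.ofReal (ρ i ^ α)

/-- The visual Hausdorff `α`-measure. -/
def visHMeasure (x : X) (α : ℝ) (B : Set (GromovBoundary X)) : ℝ≥0∞ :=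
  ⨆ (η : ℝ) (_ : 0 < η), visHContent x α η B

/-- The visual Hausdorff dimension: the critical exponent of `α ↦ visHMeasure x α B`. -/
def visHD (x : X) (B : Set (GromovBoundary X)) : EReal :=
  sInf {a : EReal | ∃ α : ℝ, a = (α : EReal) ∧ 0 ≤ α ∧ visHMeasure x α B = 0}

/-- The visual packing `α`-pre-measure, built from countable families of disjoint
generalized visual balls centered in `B`. -/
def visPackPre (x : X) (α : ℝ) (B : Set (GromovBoundary X)) : ℝ≥0∞ :=
  ⨅ (η : ℝ) (_ : 0 < η),
    ⨆ (I : Set ℕ) (z : ℕ → GromovBoundary X) (ρ : ℕ → ℝ)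
      (_ : ∀ i ∈ I, z i ∈ B ∧ 0 < ρ i ∧ ρ i ≤ η)
      (_ : I.PairwiseDisjoint fun i => visBall x (z i) (ρ i)),
      ∑' i : I, ENNReal.ofReal (ρ (i : ℕ) ^ α)

/-- The visual packing `α`-measure, obtained from the pre-measure by countable coverings. -/
def visPackMeasure (x : X) (α : ℝ) (B : Set (GromovBoundary X)) : ℝ≥0∞ :=
  ⨅ (C : ℕ → Set (GromovBoundary X)) (_ : B ⊆ ⋃ k, C k), ∑' k, visPackPre x α (C k)

/-- The visual packing dimension: the critical exponent of `α ↦ visPackMeasure x α B`. -/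
def visPD (x : X) (B : Set (GromovBoundary X)) : EReal :=
  sInf {a : EReal | ∃ α : ℝ, a = (α : EReal) ∧ 0 ≤ α ∧ visPackMeasure x α B = 0}

/-- Minimal number of generalized visual balls of radius `ρ` needed to cover `B`. -/
def visCov (x : X) (B : Set (GromovBoundary X)) (ρ : ℝ) : ℕ :=
  sInf {n : ℕ | ∃ z : Fin n → GromovBoundary X, B ⊆ ⋃ i, visBall x (z i) ρ}

/-- The visual upper Minkowski dimension. -/
def visMDsup (x : X) (B : Set (GromovBoundary X)) : EReal :=
  limsup (fun ρ : ℝ => ((Real.log (visCov x B ρ) / Real.log ρ⁻¹ : ℝ) : EReal))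
    (nhdsWithin 0 (Set.Ioi 0))

/-- The visual lower Minkowski dimension. -/
def visMDinf (x : X) (B : Set (GromovBoundary X)) : EReal :=
  liminf (fun ρ : ℝ => ((Real.log (visCov x B ρ) / Real.log ρ⁻¹ : ℝ) : EReal))
    (nhdsWithin 0 (Set.Ioi 0))

end Dimensions

end Paper

/-! Orbit points within `τ + 1` of the ray at the times `tᵢ ≥ θᵢ` stay at bounded distance from
the ray, so their mutual Gromov products grow like `min tᵢ tⱼ`: they converge to the endpoint of
the ray, which is therefore a limit point. For closedness, a boundary point `w` with points of
`Λ_{τ,Θ}` at Gromov product `> n` from it is the endpoint of a limit of the corresponding rays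
along an ultrafilter. The limit exists by properness, it still passes near the orbit in every
annulus `θᵢ ≤ d(x, ·) ≤ θᵢ₊₁` since these are closed conditions, and it ends at `w` by
δ-hyperbolicity. -/

namespace Paper

variable {X : Type*} [MetricSpace X]

section GromovProduct

theorem gromov_comm (x a b : X) : gromov x a b = gromov x b a := by
  unfold gromov; rw [dist_comm a b]; ring

theorem gromov_sub_dist_le (x y a b : X) : gromov x a b - dist x y ≤ gromov y a b := by
  unfold gromov; linarith [dist_triangle x y a, dist_triangle x y b]

theorem gromov_sub_dist_sub_dist_le (x a b a' b' : X) :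
    gromov x a b - dist a a' - dist b b' ≤ gromov x a' b' := by
  unfold gromov
  linarith [dist_triangle x a' a, dist_triangle x b' b, dist_triangle a' a b',
    dist_triangle a b b', dist_comm a' a, dist_comm b' b]

theorem IsHyperbolic.nonneg {δ : ℝ} (h : IsHyperbolic X δ) (x : X) : 0 ≤ δ := by
  have := h x x x x
  simp only [gromov, dist_self, min_self] at this
  linarith

theorem IsHyperbolic.le_gromov {δ r : ℝ} (h : IsHyperbolic X δ) {w a b c : X}
    (hab : r ≤ gromov w a b) (hbc : r ≤ gromov w b c) : r - δ ≤ gromov w a c := by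
  linarith [h w a b c, le_min hab hbc]

end GromovProduct

section Divergence

/-- `a` and `b` converge to the same point at infinity; for `a = b`, `a` converges at
infinity. -/
def GromovDiverges (x : X) (a b : ℕ → X) : Prop :=
  Tendsto (fun p : ℕ × ℕ => gromov x (a p.1) (b p.2)) atTop atTop

variable {x : X} {a b c : ℕ → X}

theorem GromovDiverges.of_base (h : GromovDiverges x a b) (y : X) : GromovDiverges y a b :=
  tendsto_atTop_mono (fun p => by linarith [gromov_sub_dist_le x y (a p.1) (b p.2)])
    (tendsto_atTop_add_const_right _ (-dist x y) h)

theorem eventually_le_gromov_swap {r : ℝ}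
    (h : ∀ᶠ p : ℕ × ℕ in atTop, r ≤ gromov x (a p.1) (b p.2)) :
    ∀ᶠ p : ℕ × ℕ in atTop, r ≤ gromov x (b p.1) (a p.2) := by
  obtain ⟨⟨N, N'⟩, hN⟩ := eventually_atTop.1 h
  exact eventually_atTop.2 ⟨(N', N), fun p hp => by
    rw [gromov_comm]; exact hN (p.2, p.1) ⟨hp.2, hp.1⟩⟩

theorem GromovDiverges.symm (h : GromovDiverges x a b) : GromovDiverges x b a :=
  tendsto_atTop.2 fun r => eventually_le_gromov_swap (tendsto_atTop.1 h r)

theorem IsHyperbolic.eventually_le_gromov_trans {δ r : ℝ} (hhyp : IsHyperbolic X δ)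
    (hab : ∀ᶠ p : ℕ × ℕ in atTop, r ≤ gromov x (a p.1) (b p.2))
    (hbc : ∀ᶠ p : ℕ × ℕ in atTop, r ≤ gromov x (b p.1) (c p.2)) :
    ∀ᶠ p : ℕ × ℕ in atTop, r - δ ≤ gromov x (a p.1) (c p.2) := by
  obtain ⟨⟨N₁, N₁'⟩, h₁⟩ := eventually_atTop.1 hab
  obtain ⟨⟨N₂, N₂'⟩, h₂⟩ := eventually_atTop.1 hbc
  exact eventually_atTop.2 ⟨(N₁, N₂'), fun p hp => hhyp.le_gromov
    (h₁ (p.1, max N₁' N₂) ⟨hp.1, le_max_left _ _⟩) (h₂ (max N₁' N₂, p.2) ⟨le_max_right _ _, hp.2⟩)⟩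

theorem IsHyperbolic.gromovDiverges_trans {δ : ℝ} (hhyp : IsHyperbolic X δ)
    (hab : GromovDiverges x a b) (hbc : GromovDiverges x b c) : GromovDiverges x a c :=
  tendsto_atTop.2 fun r => by
    simpa using hhyp.eventually_le_gromov_trans (tendsto_atTop.1 hab (r + δ))
      (tendsto_atTop.1 hbc (r + δ))

theorem IsHyperbolic.gromovRel_of_pt_eq {δ : ℝ} (hhyp : IsHyperbolic X δ) {u v : GromovSeq X}
    (h : u.pt = v.pt) : gromovRel u v := by
  have hgen : Relation.EqvGen gromovRel u v := Quot.eq.1 h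
  clear h
  induction hgen with
  | rel _ _ h => exact h
  | refl u => exact u.2
  | symm _ _ _ ih => exact fun y => GromovDiverges.symm (ih y)
  | trans _ _ _ _ _ ih₁ ih₂ => exact fun y => hhyp.gromovDiverges_trans (ih₁ y) (ih₂ y)

end Divergence

section Rays

variable {ξ : ℝ → X}

theorem IsGeodesicRay.dist_zero (h : IsGeodesicRay ξ) {t : ℝ} (ht : 0 ≤ t) :
    dist (ξ 0) (ξ t) = t := by
  rw [h 0 t le_rfl ht, zero_sub, abs_neg, abs_of_nonneg ht]

theorem IsGeodesicRay.gromov_zero (h : IsGeodesicRay ξ) {s t : ℝ} (hs : 0 ≤ s) (ht : 0 ≤ t) :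
    gromov (ξ 0) (ξ s) (ξ t) = min s t := by
  unfold gromov
  rw [h.dist_zero hs, h.dist_zero ht, h s t hs ht]
  rcases le_total s t with hst | hst
  · rw [abs_of_nonpos (by linarith), min_eq_left hst]; ring
  · rw [abs_of_nonneg (by linarith), min_eq_right hst]; ring

theorem IsGeodesicRay.gromovDiverges_of_dist_le (hξ : IsGeodesicRay ξ) {s t : ℕ → ℝ}
    (hs0 : ∀ i, 0 ≤ s i) (ht0 : ∀ j, 0 ≤ t j) (hs : Tendsto s atTop atTop)
    (ht : Tendsto t atTop atTop) {a b : ℕ → X} {C D : ℝ} (ha : ∀ i, dist (ξ (s i)) (a i) ≤ C)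
    (hb : ∀ j, dist (ξ (t j)) (b j) ≤ D) : GromovDiverges (ξ 0) a b := by
  have hmin : Tendsto (fun p : ℕ × ℕ => min (s p.1) (t p.2) + -(C + D)) atTop atTop := by
    rw [← prod_atTop_atTop_eq]
    exact tendsto_atTop_add_const_right _ _
      (tendsto_inf_atTop _ (hs.comp tendsto_fst) (ht.comp tendsto_snd))
  refine tendsto_atTop_mono (fun p => ?_) hmin
  have := gromov_sub_dist_sub_dist_le (ξ 0) (ξ (s p.1)) (ξ (t p.2)) (a p.1) (b p.2)
  rw [hξ.gromov_zero (hs0 _) (ht0 _)] at this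
  linarith [ha p.1, hb p.2]

theorem IsGeodesicRay.isGromovSeq (hξ : IsGeodesicRay ξ) : IsGromovSeq fun n : ℕ => ξ n :=
  fun y => (hξ.gromovDiverges_of_dist_le (fun n => Nat.cast_nonneg n) (fun n => Nat.cast_nonneg n)
    tendsto_natCast_atTop_atTop tendsto_natCast_atTop_atTop (C := 0) (D := 0)
    (fun _ => (dist_self _).le) (fun _ => (dist_self _).le)).of_base y

end Rays

theorem lambdaSet_subset_limitSet {G : Type*} [Group G] [MulAction G X] {x : X} {τ : ℝ}
    {θ : ℕ → ℝ} (hθ : Tendsto θ atTop atTop) : lambdaSet G x τ θ ⊆ limitSet G x := by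
  rintro z ⟨ξ, hξ, rfl, ⟨hseq, rfl⟩, hnear⟩
  choose t ht0 hθt _ hinf using hnear
  have ht : Tendsto t atTop atTop :=
    tendsto_atTop_mono (fun i => (hθt i).trans_eq (hξ.dist_zero (ht0 i))) hθ
  have horbit : ∀ i, ∃ g : G, dist (ξ (t i)) (g • ξ 0) ≤ τ + 1 := fun i => by
    obtain ⟨_, ⟨g, rfl⟩, hg⟩ := (infDist_lt_iff ⟨_, MulAction.mem_orbit_self _⟩).1
      ((hinf i).trans_lt (lt_add_one τ))
    exact ⟨g, hg.le⟩
  choose g hg using horbit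
  refine ⟨g, fun y => (hξ.gromovDiverges_of_dist_le ht0 ht0 ht ht hg hg).of_base y,
    Quot.sound fun y => ?_⟩
  exact (hξ.gromovDiverges_of_dist_le ht0 (fun n => Nat.cast_nonneg n) ht
    tendsto_natCast_atTop_atTop hg (D := 0) (fun _ => (dist_self _).le)).of_base y

section Boundary

theorem coe_lt_bProd_self (x : X) (w : GromovBoundary X) (c : ℝ) :
    (c : EReal) < bProd x w w := by
  obtain ⟨u, rfl⟩ := Quot.exists_rep w
  have hlarge : ((c + 1 : ℝ) : EReal) ≤
      liminf (fun p : ℕ × ℕ => ((gromov x (u.1 p.1) (u.1 p.2) : ℝ) : EReal)) atTop :=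
    le_liminf_of_le (by isBoundedDefault)
      (((u.2 x).eventually_ge_atTop (c + 1)).mono fun _ hp => EReal.coe_le_coe_iff.2 hp)
  exact (EReal.coe_lt_coe_iff.2 (lt_add_one c)).trans_le
    (hlarge.trans (le_iSup₂_of_le u u (le_iSup₂_of_le rfl rfl le_rfl)))

theorem exists_eventually_le_gromov_of_lt_bProd {x : X} {z w : GromovBoundary X} {r : ℝ}
    (h : (r : EReal) < bProd x z w) : ∃ u v : GromovSeq X, u.pt = z ∧ v.pt = w ∧
      ∀ᶠ p : ℕ × ℕ in atTop, r ≤ gromov x (u.1 p.1) (v.1 p.2) := by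
  simp only [bProd, lt_iSup_iff] at h
  obtain ⟨u, v, hu, hv, h⟩ := h
  exact ⟨u, v, hu, hv,
    (eventually_lt_of_lt_liminf h).mono fun _ hp => EReal.coe_le_coe_iff.1 hp.le⟩

theorem IsHyperbolic.eventually_le_gromov_of_lt_bProd {δ : ℝ} (hhyp : IsHyperbolic X δ) {x : X}
    {z w : GromovBoundary X} {r : ℝ} (h : (r : EReal) < bProd x z w) (u v : GromovSeq X)
    (hu : u.pt = z) (hv : v.pt = w) :
    ∀ᶠ p : ℕ × ℕ in atTop, r - 2 * δ ≤ gromov x (v.1 p.1) (u.1 p.2) := by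
  obtain ⟨u', v', hu', hv', hr⟩ := exists_eventually_le_gromov_of_lt_bProd h
  have hvv' := tendsto_atTop.1 (hhyp.gromovRel_of_pt_eq (hv.trans hv'.symm) x) r
  have hu'u := tendsto_atTop.1 (hhyp.gromovRel_of_pt_eq (hu'.trans hu.symm) x) (r - δ)
  have := hhyp.eventually_le_gromov_trans
    (hhyp.eventually_le_gromov_trans hvv' (eventually_le_gromov_swap hr)) hu'u
  exact this.mono fun _ hp => by linarith

theorem isClosed_bTop_of_forall_lt_bProd (x : X) {S : Set (GromovBoundary X)}
    (h : ∀ w, (∀ n : ℕ, ∃ z ∈ S, (n : EReal) < bProd x w z) → w ∈ S) : IsClosed[bTop X] S := by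
  let := bTop X
  refine ⟨isOpen_iff_forall_mem_open.2 fun w hw => ?_⟩
  obtain ⟨n, hn⟩ : ∃ n : ℕ, ∀ z ∈ S, ¬(n : EReal) < bProd x w z := by
    simpa using mt (h w) hw
  refine ⟨visBall x w (Real.exp (-n)), fun z hz hzS => hn z hzS ?_,
    TopologicalSpace.isOpen_generateFrom_of_mem ⟨x, w, _, Real.exp_pos _, rfl⟩,
    coe_lt_bProd_self x w _⟩
  simpa [visBall, Real.log_inv, Real.log_exp] using hz

end Boundary

section Limits

theorem _root_.IsCompact.exists_tendsto_ultrafilter {α ι : Type*} [TopologicalSpace α]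
    {s : Set α} (hs : IsCompact s) (𝒰 : Ultrafilter ι) {f : ι → α} (hf : ∀ i, f i ∈ s) :
    ∃ a ∈ s, Tendsto f 𝒰 (𝓝 a) := by
  simpa only [Ultrafilter.coe_map, Tendsto] using hs.ultrafilter_le_nhds' (𝒰.map f)
    (Ultrafilter.mem_map.2 (Eventually.of_forall hf))

variable {ι : Type*} {ξs : ι → ℝ → X} {ξ : ℝ → X}

theorem exists_isGeodesicRay_tendsto [ProperSpace X] (𝒰 : Ultrafilter ι) {x : X}
    (hξs : ∀ n, IsGeodesicRay (ξs n)) (h0 : ∀ n, ξs n 0 = x) :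
    ∃ ξ : ℝ → X, IsGeodesicRay ξ ∧ ξ 0 = x ∧
      ∀ s, 0 ≤ s → Tendsto (fun n => ξs n s) 𝒰 (𝓝 (ξ s)) := by
  have hlim : ∀ s, ∃ y : X, 0 ≤ s → Tendsto (fun n => ξs n s) 𝒰 (𝓝 y) := fun s => by
    by_cases hs : 0 ≤ s
    · obtain ⟨y, -, hy⟩ := (isCompact_closedBall x s).exists_tendsto_ultrafilter 𝒰 fun n => by
        rw [mem_closedBall, dist_comm, ← h0 n, (hξs n).dist_zero hs]
      exact ⟨y, fun _ => hy⟩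
    · exact ⟨x, fun h => absurd h hs⟩
  choose ξ hξ using hlim
  refine ⟨ξ, fun s t hs ht => ?_, ?_, hξ⟩
  · have := (hξ s hs).dist (hξ t ht)
    simp only [fun n => hξs n s t hs ht] at this
    exact (tendsto_const_nhds_iff.1 this).symm
  · have := hξ 0 le_rfl
    simp only [h0] at this
    exact (tendsto_const_nhds_iff.1 this).symm

theorem tendsto_apply_of_isGeodesicRay {l : Filter ι} (hξs : ∀ n, IsGeodesicRay (ξs n)) {s : ℝ}
    (hs : 0 ≤ s) (hlim : Tendsto (fun n => ξs n s) l (𝓝 (ξ s))) {t : ι → ℝ} (ht0 : ∀ n, 0 ≤ t n)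
    (ht : Tendsto t l (𝓝 s)) : Tendsto (fun n => ξs n (t n)) l (𝓝 (ξ s)) := by
  refine hlim.congr_dist ?_
  simp only [fun n => hξs n s (t n) hs (ht0 n)]
  simpa using (ht.const_sub s).abs

/-- The condition defining `lambdaSet` at one scale passes to limits of rays. -/
theorem exists_near_of_tendsto (𝒰 : Ultrafilter ι) (hξs : ∀ n, IsGeodesicRay (ξs n))
    (hξ : IsGeodesicRay ξ) (h0 : ∀ n, ξs n 0 = ξ 0)
    (hlim : ∀ s, 0 ≤ s → Tendsto (fun n => ξs n s) 𝒰 (𝓝 (ξ s))) {a b τ : ℝ} {S : Set X}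
    (h : ∀ n, ∃ t, 0 ≤ t ∧ a ≤ dist (ξ 0) (ξs n t) ∧ dist (ξ 0) (ξs n t) ≤ b ∧
      infDist (ξs n t) S ≤ τ) :
    ∃ t, 0 ≤ t ∧ a ≤ dist (ξ 0) (ξ t) ∧ dist (ξ 0) (ξ t) ≤ b ∧ infDist (ξ t) S ≤ τ := by
  choose t ht0 hat htb hS using h
  have hdist : ∀ n, dist (ξ 0) (ξs n (t n)) = t n := fun n => by
    rw [← h0 n, (hξs n).dist_zero (ht0 n)]
  obtain ⟨s, ⟨has, hsb⟩, hs⟩ := isCompact_Icc.exists_tendsto_ultrafilter 𝒰 (f := t) fun n =>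
    ⟨max_le (by rw [← hdist n]; exact hat n) (ht0 n), by rw [← hdist n]; exact htb n⟩
  have hs0 : 0 ≤ s := le_of_max_le_right has
  have hconv := tendsto_apply_of_isGeodesicRay hξs hs0 (hlim s hs0) ht0 hs
  refine ⟨s, hs0, ?_, ?_, le_of_tendsto ((continuous_infDist_pt S).tendsto _ |>.comp hconv)
    (Eventually.of_forall hS)⟩ <;> rw [hξ.dist_zero hs0]
  exacts [le_of_max_le_left has, hsb]

end Limits

theorem IsHyperbolic.gromovDiverges_ray_of_approx {δ : ℝ} (hhyp : IsHyperbolic X δ)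
    {ξs : ℕ → ℝ → X} {ξ : ℝ → X} (hξs : ∀ n, IsGeodesicRay (ξs n)) (hξ : IsGeodesicRay ξ)
    (h0 : ∀ n, ξs n 0 = ξ 0) {u : ℕ → X}
    (h : ∀ (K : ℕ) (r : ℝ), ∃ n, dist (ξs n K) (ξ K) ≤ 1 ∧
      ∀ᶠ p : ℕ × ℕ in atTop, r ≤ gromov (ξ 0) (ξs n p.1) (u p.2)) :
    GromovDiverges (ξ 0) (fun k : ℕ => ξ k) u := by
  have hδ := hhyp.nonneg (ξ 0)
  refine tendsto_atTop.2 fun r => ?_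
  obtain ⟨K, hK⟩ := exists_nat_ge (r + 1 + 2 * δ)
  obtain ⟨n, hn, hfar⟩ := h K K
  obtain ⟨⟨L, M⟩, hLM⟩ := eventually_atTop.1 hfar
  -- pass from `ξ K` to `u m` through a far point of the ray `ξs n`, which follows `ξ` up to `K`
  have hKu : ∀ m ≥ M, (K : ℝ) - 1 - δ ≤ gromov (ξ 0) (ξ K) (u m) := fun m hm => by
    have hKL : (K : ℝ) - 1 ≤ gromov (ξ 0) (ξ K) (ξs n ↑(max K L)) := by
      have := gromov_sub_dist_sub_dist_le (ξ 0) (ξs n K) (ξs n ↑(max K L)) (ξ K)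
        (ξs n ↑(max K L))
      rw [← h0 n, (hξs n).gromov_zero (Nat.cast_nonneg _) (Nat.cast_nonneg _), h0 n,
        min_eq_left (Nat.cast_le.2 (le_max_left K L)), dist_self] at this
      linarith
    exact hhyp.le_gromov hKL
      ((hLM (max K L, m) ⟨le_max_right K L, hm⟩).trans' (by linarith))
  refine eventually_atTop.2 ⟨(K, M), fun p hp => ?_⟩
  have hpK : (K : ℝ) - 1 - δ ≤ gromov (ξ 0) (ξ p.1) (ξ K) := by
    rw [hξ.gromov_zero (Nat.cast_nonneg _) (Nat.cast_nonneg _),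
      min_eq_right (Nat.cast_le.2 hp.1)]
    linarith
  linarith [hhyp.le_gromov hpK (hKu p.2 hp.2)]

theorem IsHyperbolic.mem_lambdaSet_of_forall_lt_bProd [ProperSpace X] {δ : ℝ}
    (hhyp : IsHyperbolic X δ) {G : Type*} [Group G] [MulAction G X] {x : X} {τ : ℝ}
    {θ : ℕ → ℝ} {w : GromovBoundary X}
    (h : ∀ n : ℕ, ∃ z ∈ lambdaSet G x τ θ, (n : EReal) < bProd x w z) :
    w ∈ lambdaSet G x τ θ := by
  choose z hz hwz using h
  choose ξs hξs h0 hray hnear using hz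
  set 𝒰 : Ultrafilter ℕ := Ultrafilter.of atTop
  obtain ⟨ξ, hξ, rfl, hlim⟩ := exists_isGeodesicRay_tendsto 𝒰 hξs h0
  obtain ⟨u, rfl⟩ := Quot.exists_rep w
  refine ⟨ξ, hξ, rfl, ⟨hξ.isGromovSeq, Quot.sound fun y => ?_⟩,
    fun i => exists_near_of_tendsto 𝒰 hξs hξ h0 hlim fun n => hnear n i⟩
  refine (hhyp.gromovDiverges_ray_of_approx hξs hξ h0 fun K r => ?_).of_base y
  have hclose : ∀ᶠ n in (𝒰 : Filter ℕ), dist (ξs n K) (ξ K) < 1 ∧ r + 2 * δ ≤ n :=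
    (tendsto_iff_dist_tendsto_zero.1 (hlim K (Nat.cast_nonneg K)) |>.eventually_lt_const
      one_pos).and (Ultrafilter.of_le atTop (tendsto_natCast_atTop_atTop.eventually_ge_atTop _))
  obtain ⟨n, hn, hrn⟩ := hclose.exists
  obtain ⟨hseq, hpt⟩ := hray n
  refine ⟨n, hn.le, ?_⟩
  filter_upwards [hhyp.eventually_le_gromov_of_lt_bProd (hwz n) u ⟨_, hseq⟩ rfl hpt] with p hp
  linarith

end Paper

open Paper in
theorem statement_6_general {X : Type*} [MetricSpace X] [ProperSpace X]
    (δ : ℝ) (hhyp : IsHyperbolic X δ)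
    (G : Type*) [Group G] [MulAction G X]
    (x : X)
    (τ : ℝ) (θ : ℕ → ℝ) (hθ : IncrUnbounded θ) :
    lambdaSet G x τ θ ⊆ limitSet G x ∧ IsClosed[bTop X] (lambdaSet G x τ θ) :=
  ⟨lambdaSet_subset_limitSet hθ.2,
    isClosed_bTop_of_forall_lt_bProd x fun _ => hhyp.mem_lambdaSet_of_forall_lt_bProd⟩

open Paper in
/-- For a proper δ-hyperbolic (geodesic) metric space `X`, a discrete group
`Γ = G` of isometries, a basepoint `x`, `τ ≥ 0` and an increasing unbounded sequence `θ`: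
(i) `Λ_{τ,Θ}(Γ)` is contained in the limit set `Λ(Γ)`, and (ii) `Λ_{τ,Θ}(Γ)` is closed in the
Gromov boundary. -/
theorem statement_6 {X : Type*} [MetricSpace X] [ProperSpace X]
    (hgeo : IsGeodesicSpace X) (δ : ℝ) (hδ : 0 ≤ δ) (hhyp : IsHyperbolic X δ)
    (G : Type*) [Group G] [MulAction G X] [IsIsometricSMul G X]
    (hdisc : DiscreteAction G X) (x : X)
    (τ : ℝ) (hτ : 0 ≤ τ) (θ : ℕ → ℝ) (hθ : IncrUnbounded θ) :
    lambdaSet G x τ θ ⊆ limitSet G x ∧ IsClosed[bTop X] (lambdaSet G x τ θ) :=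
  statement_6_general δ hhyp G x τ θ hθ
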